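/- Let k ≥ 2 and a ∈ (0,1]. For the function f(z) = z^k (a−z)/(1−az) ∈ 𝓑_k, whose Taylor coefficients are a_k = a and a_{k+n} = −(1−a²)a^{n−1} for n ≥ 1, the quantity B(r) := ∑_{n=k}^∞ |a_n| r^n + ( r^{−k}/(1+a) + r^{1−k}/(1−r) ) · ∑_{n=k}^∞ |a_n|² r^{2n} equals r^k[2a² + a + r(1−2a²)] / ((1+a)(1−r)) for every r ∈ (0,1). In particular B(ρ_k(a)) = 1 and B(r) > 1 for r ∈ (ρ_k(a), 1), so the bound ρ_k(a) in Theorem 3 is sharp. -/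

import Mathlib

/-!
Both series in `B` are geometric, with ratios `a r` and `a² r²`, so `B` has the stated closed
form. Hence `B r > 1` exactly when `g r := r^k (2a² + a + r(1 − 2a²)) − (1 + a)(1 − r) > 0`.
The root condition says `g ρ = 0`, and `g` is strictly increasing on `[0, 1]`: writing
`g r − g s = (2a²(1 − r) + a + r)(r^k − s^k) + (1 − 2a²) s^k (r − s) + (1 + a)(r − s)`,
the first term is nonnegative and `(1 − 2a²) s^k ≥ −1 > −(1 + a)`.
-/

open Set

lemma tsum_mul_pow_mul_pow_add {K : Type*} [NormedField K] [CompleteSpace K] {a r : K}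
    (c : K) (m : ℕ) (h : ‖a * r‖ < 1) :
    ∑' n : ℕ, c * a ^ n * r ^ (n + m) = c * r ^ m / (1 - a * r) := by
  have hterm : ∀ n : ℕ, c * a ^ n * r ^ (n + m) = c * r ^ m * (a * r) ^ n := fun n => by ring
  rw [tsum_congr hterm, tsum_mul_left, tsum_geometric_of_norm_lt_one h, div_eq_mul_inv]

lemma bohr_sum_blaschke_eq (k : ℕ) {a r : ℝ} (ha0 : 0 ≤ a) (ha1 : a ≤ 1) (hr : r ∈ Ioo 0 1) :
    (a * r ^ k + ∑' n : ℕ, (1 - a ^ 2) * a ^ n * r ^ (n + k + 1)) +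
        (r ^ (-(k : ℤ)) / (1 + a) + r ^ (1 - (k : ℤ)) / (1 - r)) *
          (a ^ 2 * r ^ (2 * k) +
            ∑' n : ℕ, ((1 - a ^ 2) * a ^ n) ^ 2 * r ^ (2 * n + 2 * k + 2)) =
      r ^ k * (2 * a ^ 2 + a + r * (1 - 2 * a ^ 2)) / ((1 + a) * (1 - r)) := by
  obtain ⟨hr0, hr1⟩ := hr
  have har : |a * r| < 1 := by rw [abs_of_nonneg (by positivity)]; nlinarith
  have har2 : |a ^ 2 * r ^ 2| < 1 := by
    rw [← mul_pow, abs_pow]; exact pow_lt_one₀ (abs_nonneg _) har two_ne_zero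
  have hlin : ∑' n : ℕ, (1 - a ^ 2) * a ^ n * r ^ (n + k + 1) =
      (1 - a ^ 2) * r ^ (k + 1) / (1 - a * r) := by
    simp_rw [add_assoc]
    exact tsum_mul_pow_mul_pow_add _ _ har
  have hsq : ∑' n : ℕ, ((1 - a ^ 2) * a ^ n) ^ 2 * r ^ (2 * n + 2 * k + 2) =
      (1 - a ^ 2) ^ 2 * (r ^ 2) ^ (k + 1) / (1 - a ^ 2 * r ^ 2) := by
    rw [← tsum_mul_pow_mul_pow_add _ _ har2]
    exact tsum_congr fun n => by ring
  have hrk : r ^ (-(k : ℤ)) = (r ^ k)⁻¹ := by rw [zpow_neg, zpow_natCast]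
  have hrk1 : r ^ (1 - (k : ℤ)) = r / r ^ k := by
    rw [zpow_sub₀ hr0.ne', zpow_one, zpow_natCast]
  have hne1 : 1 - a * r ≠ 0 := by nlinarith
  have hne2 : 1 - a ^ 2 * r ^ 2 ≠ 0 := by nlinarith
  have hne3 : 1 - r ≠ 0 := by linarith
  have hne4 : 1 + a ≠ 0 := by linarith
  rw [hlin, hsq, hrk, hrk1]
  field_simp
  ring

lemma strictMonoOn_bohr_gap (k : ℕ) {a : ℝ} (ha : a ∈ Ioc 0 1) :
    StrictMonoOn (fun r : ℝ => r ^ k * (2 * a ^ 2 + a + r * (1 - 2 * a ^ 2)) - (1 + a) * (1 - r))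
      (Icc 0 1) := by
  obtain ⟨ha0, ha1⟩ := ha
  intro s ⟨hs0, hs1⟩ r ⟨_, hr1⟩ hsr
  have hpow : s ^ k ≤ r ^ k := pow_le_pow_left₀ hs0 hsr.le k
  have hsk : s ^ k ≤ 1 := pow_le_one₀ hs0 hs1
  have hcoef : 0 ≤ 2 * a ^ 2 + a + r * (1 - 2 * a ^ 2) := by nlinarith
  have hfirst := mul_nonneg hcoef (sub_nonneg.mpr hpow)
  have hsecond : -(s ^ k * (r - s)) ≤ (1 - 2 * a ^ 2) * s ^ k * (r - s) := by
    have h2a : 0 ≤ 2 - 2 * a ^ 2 := by nlinarith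
    nlinarith [mul_nonneg h2a (mul_nonneg (pow_nonneg hs0 k) (sub_nonneg.mpr hsr.le))]
  have hthird : s ^ k * (r - s) < (1 + a) * (r - s) := by nlinarith
  simp only
  nlinarith

theorem bohr_stmt12_general (k : ℕ) (a : ℝ) (ha : a ∈ Set.Ioc (0 : ℝ) 1)
    (ρ : ℝ) (hρ : ρ ∈ Set.Ioo (0 : ℝ) 1)
    (hroot : (1 + a) * (1 - ρ) - ρ ^ k * (2 * a ^ 2 + a + ρ * (1 - 2 * a ^ 2)) = 0)
    (B : ℝ → ℝ)
    (hB : B = fun r : ℝ =>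
      (a * r ^ k + ∑' n : ℕ, (1 - a ^ 2) * a ^ n * r ^ (n + k + 1)) +
        (r ^ (-(k : ℤ)) / (1 + a) + r ^ (1 - (k : ℤ)) / (1 - r)) *
          (a ^ 2 * r ^ (2 * k) +
            ∑' n : ℕ, ((1 - a ^ 2) * a ^ n) ^ 2 * r ^ (2 * n + 2 * k + 2))) :
    (∀ r ∈ Set.Ioo (0 : ℝ) 1,
      B r = r ^ k * (2 * a ^ 2 + a + r * (1 - 2 * a ^ 2)) / ((1 + a) * (1 - r))) ∧
    B ρ = 1 ∧
    (∀ r ∈ Set.Ioo ρ 1, 1 < B r) := by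
  have hclosed : ∀ r ∈ Ioo (0 : ℝ) 1,
      B r = r ^ k * (2 * a ^ 2 + a + r * (1 - 2 * a ^ 2)) / ((1 + a) * (1 - r)) :=
    fun r hr => hB ▸ bohr_sum_blaschke_eq k ha.1.le ha.2 hr
  have hden : ∀ r < 1, 0 < (1 + a) * (1 - r) := fun r hr =>
    mul_pos (by linarith [ha.1]) (by linarith)
  refine ⟨hclosed, ?_, ?_⟩
  · rw [hclosed ρ hρ, div_eq_one_iff_eq (hden ρ hρ.2).ne']
    linarith
  · rintro r ⟨hρr, hr1⟩
    have hgap := strictMonoOn_bohr_gap k ha ⟨hρ.1.le, hρ.2.le⟩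
      ⟨hρ.1.le.trans hρr.le, hr1.le⟩ hρr
    rw [hclosed r ⟨hρ.1.trans hρr, hr1⟩, one_lt_div (hden r hr1)]
    simp only at hgap
    linarith

/-- Sharpness of `ρ_k(a)` in Theorem 3: for `f(z) = z^k (a−z)/(1−az)` with coefficients
`a_k = a`, `a_{k+n} = −(1−a²)a^{n−1}` (`n ≥ 1`), the Bohr-type quantity `B(r)` equals
`r^k (2a² + a + r(1−2a²)) / ((1+a)(1−r))` for `r ∈ (0,1)`; in particular
`B(ρ_k(a)) = 1` and `B(r) > 1` for `r ∈ (ρ_k(a), 1)`. -/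
theorem bohr_stmt12 (k : ℕ) (hk : 2 ≤ k) (a : ℝ) (ha : a ∈ Set.Ioc (0 : ℝ) 1)
    (ρ : ℝ) (hρ : ρ ∈ Set.Ioo (0 : ℝ) 1)
    (hroot : (1 + a) * (1 - ρ) - ρ ^ k * (2 * a ^ 2 + a + ρ * (1 - 2 * a ^ 2)) = 0)
    (B : ℝ → ℝ)
    (hB : B = fun r : ℝ =>
      (a * r ^ k + ∑' n : ℕ, (1 - a ^ 2) * a ^ n * r ^ (n + k + 1)) +
        (r ^ (-(k : ℤ)) / (1 + a) + r ^ (1 - (k : ℤ)) / (1 - r)) *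
          (a ^ 2 * r ^ (2 * k) +
            ∑' n : ℕ, ((1 - a ^ 2) * a ^ n) ^ 2 * r ^ (2 * n + 2 * k + 2))) :
    (∀ r ∈ Set.Ioo (0 : ℝ) 1,
      B r = r ^ k * (2 * a ^ 2 + a + r * (1 - 2 * a ^ 2)) / ((1 + a) * (1 - r))) ∧
    B ρ = 1 ∧
    (∀ r ∈ Set.Ioo ρ 1, 1 < B r) :=
  bohr_stmt12_general k a ha ρ hρ hroot B hB
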